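/- Regard 𝓔 as a function of (d_ij, d_jk, θ). If at a point the equilibrium condition H² = I_H²/d_ki³ holds, then at that point the partial derivative of 𝓔 with respect to d_ij equals m_i m_j (1/d_ij³ − 1/d_ki³) d_ij; in particular, this partial derivative is nonnegative (the contact constraint on d_ij remains enforced) if and only if d_ij ≤ d_ki. -/

import Mathlib

/-!
Since `d_ki² = d_ij² + d_jk² − 2 d_ij d_jk cos θ` is a polynomial in `d_ij`, so is `I_H`, with
`∂I_H/∂d_ij = 2 m_i m_j d_ij + 2 m_k m_i (d_ij − d_jk cos θ)`, and `∂d_ki/∂d_ij = (d_ij − d_jk cos θ)/d_ki`.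
Substituting `H² = I_H²/d_ki³` into `∂𝓔/∂d_ij = −H² ∂I_H/(2 I_H²) + m_i m_j/d_ij² + m_k m_i ∂d_ki/d_ki²`,
the two `m_k m_i` terms cancel and `m_i m_j (1/d_ij² − d_ij/d_ki³)` remains.
-/

/-- Third side from the law of cosines. -/
noncomputable def dki (dij djk θ : ℝ) : ℝ :=
  Real.sqrt (dij ^ 2 + djk ^ 2 - 2 * dij * djk * Real.cos θ)

/-- Moment of inertia about the rotation axis. -/
noncomputable def IH (mi mj mk IS dij djk θ : ℝ) : ℝ :=
  mi * mj * dij ^ 2 + mj * mk * djk ^ 2 + mk * mi * (dki dij djk θ) ^ 2 + IS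

/-- The amended potential `𝓔 = H²/(2 I_H) + U` as a function of
`(d_ij, d_jk, θ)`. -/
noncomputable def amended (mi mj mk IS H dij djk θ : ℝ) : ℝ :=
  H ^ 2 / (2 * IH mi mj mk IS dij djk θ)
    - (mi * mj / dij + mj * mk / djk + mk * mi / dki dij djk θ)

open Real

theorem law_of_cosines_eq_sq_add_sq (a b θ : ℝ) :
    a ^ 2 + b ^ 2 - 2 * a * b * cos θ = (a - b * cos θ) ^ 2 + (b * sin θ) ^ 2 := by
  linear_combination -b ^ 2 * sin_sq_add_cos_sq θ

theorem law_of_cosines_pos {a b θ : ℝ} (ha : a ≠ 0) (hθ : sin θ ≠ 0) :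
    0 < a ^ 2 + b ^ 2 - 2 * a * b * cos θ := by
  rw [law_of_cosines_eq_sq_add_sq]
  rcases eq_or_ne b 0 with rfl | hb
  · simpa using sq_pos_of_ne_zero ha
  · have := mul_ne_zero hb hθ
    positivity

theorem dki_sq (a b θ : ℝ) : dki a b θ ^ 2 = a ^ 2 + b ^ 2 - 2 * a * b * cos θ := by
  rw [dki, sq_sqrt (by rw [law_of_cosines_eq_sq_add_sq]; positivity)]

theorem dki_pos {a b θ : ℝ} (ha : a ≠ 0) (hθ : sin θ ≠ 0) : 0 < dki a b θ :=
  sqrt_pos.mpr (law_of_cosines_pos ha hθ)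

theorem hasDerivAt_law_of_cosines (a b θ : ℝ) :
    HasDerivAt (fun x => x ^ 2 + b ^ 2 - 2 * x * b * cos θ) (2 * a - 2 * b * cos θ) a := by
  have h := ((hasDerivAt_pow 2 a).add_const (b ^ 2)).sub
    ((((hasDerivAt_id' a).const_mul 2).mul_const b).mul_const (cos θ))
  exact h.congr_deriv (by norm_num)

theorem hasDerivAt_dki {a b θ : ℝ} (ha : a ≠ 0) (hθ : sin θ ≠ 0) :
    HasDerivAt (fun x => dki x b θ) ((a - b * cos θ) / dki a b θ) a :=
  ((hasDerivAt_law_of_cosines a b θ).sqrt (law_of_cosines_pos ha hθ).ne').congr_deriv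
    (by rw [dki]; ring)

theorem IH_eq (mi mj mk IS a b θ : ℝ) :
    IH mi mj mk IS a b θ =
      mi * mj * a ^ 2 + mj * mk * b ^ 2 + mk * mi * (a ^ 2 + b ^ 2 - 2 * a * b * cos θ) + IS := by
  rw [IH, dki_sq]

theorem hasDerivAt_IH (mi mj mk IS a b θ : ℝ) :
    HasDerivAt (fun x => IH mi mj mk IS x b θ)
      (2 * mi * mj * a + 2 * mk * mi * (a - b * cos θ)) a := by
  simp only [IH_eq]
  have h := ((((hasDerivAt_pow 2 a).const_mul (mi * mj)).add_const (mj * mk * b ^ 2)).add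
    ((hasDerivAt_law_of_cosines a b θ).const_mul (mk * mi))).add_const IS
  exact h.congr_deriv (by norm_num; ring)

theorem IH_pos {mi mj mk IS : ℝ} (hmi : 0 ≤ mi) (hmj : 0 ≤ mj) (hmk : 0 ≤ mk) (hIS : 0 < IS)
    (a b θ : ℝ) : 0 < IH mi mj mk IS a b θ := by
  rw [IH]
  positivity

theorem hasDerivAt_amended {mi mj mk IS H a b θ : ℝ} (ha : a ≠ 0) (hθ : sin θ ≠ 0)
    (hI : IH mi mj mk IS a b θ ≠ 0) :
    HasDerivAt (fun x => amended mi mj mk IS H x b θ)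
      (-H ^ 2 * (2 * mi * mj * a + 2 * mk * mi * (a - b * cos θ)) / (2 * IH mi mj mk IS a b θ ^ 2)
        + mi * mj / a ^ 2 + mk * mi * (a - b * cos θ) / dki a b θ ^ 3) a := by
  have hd : dki a b θ ≠ 0 := (dki_pos ha hθ).ne'
  have hkin := (hasDerivAt_const a (H ^ 2)).div ((hasDerivAt_IH mi mj mk IS a b θ).const_mul 2)
    (mul_ne_zero two_ne_zero hI)
  have hpot := (((hasDerivAt_const a (mi * mj)).div (hasDerivAt_id' a) ha).add
    (hasDerivAt_const a (mj * mk / b))).add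
      ((hasDerivAt_const a (mk * mi)).div (hasDerivAt_dki ha hθ) hd)
  exact (hkin.sub hpot).congr_deriv (by field_simp; ring)

theorem deriv_amended_of_equilibrium {mi mj mk IS H a b θ : ℝ} (ha : a ≠ 0) (hθ : sin θ ≠ 0)
    (hI : IH mi mj mk IS a b θ ≠ 0)
    (hequil : H ^ 2 = IH mi mj mk IS a b θ ^ 2 / dki a b θ ^ 3) :
    deriv (fun x => amended mi mj mk IS H x b θ) a = mi * mj * (1 / a ^ 3 - 1 / dki a b θ ^ 3) * a := by
  have hd : dki a b θ ≠ 0 := (dki_pos ha hθ).ne'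
  rw [(hasDerivAt_amended ha hθ hI).deriv, hequil]
  field_simp
  ring

theorem mul_sub_inv_pow_three_mul_nonneg_iff {m a d : ℝ} (hm : 0 < m) (ha : 0 < a) (hd : 0 < d) :
    0 ≤ m * (1 / a ^ 3 - 1 / d ^ 3) * a ↔ a ≤ d := by
  rw [mul_comm m, mul_assoc, mul_nonneg_iff_of_pos_right (mul_pos hm ha), sub_nonneg,
    one_div_le_one_div (by positivity) (by positivity)]
  exact pow_le_pow_iff_left₀ ha.le hd.le three_ne_zero

theorem contact_constraint_at_equilibrium_general
    (mi mj mk IS H dij djk θ : ℝ)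
    (hmi : 0 < mi) (hmj : 0 < mj) (hmk : 0 < mk) (hIS : 0 < IS)
    (hdij : 0 < dij) (hθ : θ ∈ Set.Ioo 0 Real.pi)
    (hequil : H ^ 2 = (IH mi mj mk IS dij djk θ) ^ 2 / (dki dij djk θ) ^ 3) :
    deriv (fun x => amended mi mj mk IS H x djk θ) dij =
        mi * mj * (1 / dij ^ 3 - 1 / (dki dij djk θ) ^ 3) * dij ∧
      (0 ≤ deriv (fun x => amended mi mj mk IS H x djk θ) dij ↔
        dij ≤ dki dij djk θ) := by
  have hsin : sin θ ≠ 0 := (sin_pos_of_pos_of_lt_pi hθ.1 hθ.2).ne'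
  have hderiv := deriv_amended_of_equilibrium hdij.ne' hsin
    (IH_pos hmi.le hmj.le hmk.le hIS dij djk θ).ne' hequil
  rw [hderiv]
  exact ⟨rfl, mul_sub_inv_pow_three_mul_nonneg_iff (mul_pos hmi hmj) hdij (dki_pos hdij.ne' hsin)⟩

/-- At a point where the equilibrium condition `H² = I_H²/d_ki³` holds, the
partial derivative of `𝓔` with respect to `d_ij` equals
`m_i m_j (1/d_ij³ − 1/d_ki³) d_ij`, and it is nonnegative (the contact
constraint on `d_ij` remains enforced) iff `d_ij ≤ d_ki`. -/
theorem contact_constraint_at_equilibrium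
    (mi mj mk IS H dij djk θ : ℝ)
    (hmi : 0 < mi) (hmj : 0 < mj) (hmk : 0 < mk) (hIS : 0 < IS) (hH : 0 ≤ H)
    (hdij : 0 < dij) (hdjk : 0 < djk) (hθ : θ ∈ Set.Ioo 0 Real.pi)
    (hequil : H ^ 2 = (IH mi mj mk IS dij djk θ) ^ 2 / (dki dij djk θ) ^ 3) :
    deriv (fun x => amended mi mj mk IS H x djk θ) dij =
        mi * mj * (1 / dij ^ 3 - 1 / (dki dij djk θ) ^ 3) * dij ∧
      (0 ≤ deriv (fun x => amended mi mj mk IS H x djk θ) dij ↔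
        dij ≤ dki dij djk θ) :=
  contact_constraint_at_equilibrium_general mi mj mk IS H dij djk θ hmi hmj hmk hIS hdij hθ hequil
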